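/- Let a, b, H, κ, L be real numbers with a > 0, b > 0 and H > 0. Define on the set D = {(x,y) ∈ ℝ² : a y + b > 0} the viscosity ν(x,y) = a y + b, the velocity field u(x,y) = ( (κ/a)(H − y + (b/a)·ln((y + b/a)/(H + b/a))), 0 ), and the pressure p(x,y) = κ(L/2 − x). Then on D the pair (u, p) satisfies the variable-viscosity Stokes equations with zero reaction and zero forcing: −∇·(2ν∇^s u) + ∇p = 0 and ∇·u = 0. -/

import Mathlib

noncomputable def pd (j : Fin 2) (f : (Fin 2 → ℝ) → ℝ) (x : Fin 2 → ℝ) : ℝ :=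
  fderiv ℝ f x (Pi.single j 1)

lemma phi_hasDerivAt (a b H κ : ℝ) (ha : 0 < a) (hb : 0 < b) (hH : 0 < H) (t : ℝ)
    (ht : 0 < a * t + b) :
    HasDerivAt (fun s => κ / a * (H - s + b / a * Real.log ((s + b / a) / (H + b / a))))
      (-κ * t / (a * t + b)) t := by
  have hK : 0 < H + b / a := by positivity
  have htc : 0 < t + b / a := by
    have h : t + b / a = (a * t + b) / a := by field_simp
    rw [h]; positivity
  have hinner : HasDerivAt (fun s => (s + b / a) / (H + b / a)) (1 / (H + b / a)) t := by
    simpa using ((hasDerivAt_id t).add_const (b / a)).div_const (H + b / a)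
  have hlog := hinner.log (by positivity)
  have h3 : HasDerivAt (fun s : ℝ => H - s) (-1) t := by
    simpa using (hasDerivAt_id t).const_sub H
  have h4 := (h3.add (hlog.const_mul (b / a))).const_mul (κ / a)
  refine HasDerivAt.congr_deriv (h4.congr_of_eventuallyEq (Filter.Eventually.of_forall fun s => rfl)) ?_
  have h1 : a ≠ 0 := ne_of_gt ha
  have h2 : a * t + b ≠ 0 := ne_of_gt ht
  have h5 : t + b / a ≠ 0 := ne_of_gt htc
  have h6 : H + b / a ≠ 0 := ne_of_gt hK
  have h7 : t * a + b ≠ 0 := by rw [mul_comm]; exact h2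
  field_simp
  ring


lemma pd_congr {f g : (Fin 2 → ℝ) → ℝ} {x : Fin 2 → ℝ} (j : Fin 2)
    (h : f =ᶠ[nhds x] g) : pd j f x = pd j g x := by
  unfold pd
  rw [h.fderiv_eq]

lemma pd_of_hasFDerivAt {f : (Fin 2 → ℝ) → ℝ} {F : (Fin 2 → ℝ) →L[ℝ] ℝ} {x : Fin 2 → ℝ}
    (j : Fin 2) (h : HasFDerivAt f F x) : pd j f x = F (Pi.single j 1) := by
  unfold pd
  rw [h.fderiv]

/-- The reaction-free channel-flow solution: with viscosity `ν(x,y) = a y + b`,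
velocity `u = ((κ/a)(H − y + (b/a)ln((y + b/a)/(H + b/a))), 0)` and pressure
`p = κ(L/2 − x)`, the pair `(u, p)` satisfies `−∇·(2ν∇ˢu) + ∇p = 0` and `∇·u = 0`
on `D = {(x,y) : a y + b > 0}`. -/
theorem reaction_free_channel_solution
    (a b H κ L : ℝ) (ha : 0 < a) (hb : 0 < b) (hH : 0 < H)
    (ν : (Fin 2 → ℝ) → ℝ) (hν : ν = fun z => a * z 1 + b)
    (u : (Fin 2 → ℝ) → Fin 2 → ℝ)
    (hu : u = fun z => ![κ / a * (H - z 1 + b / a * Real.log ((z 1 + b / a) / (H + b / a))), 0])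
    (p : (Fin 2 → ℝ) → ℝ) (hp : p = fun z => κ * (L / 2 - z 0)) :
    ∀ z : Fin 2 → ℝ, a * z 1 + b > 0 →
      (∀ i : Fin 2,
        -(∑ j, pd j (fun y => ν y * (pd j (fun w => u w i) y + pd i (fun w => u w j) y)) z)
          + pd i p z = 0)
      ∧ ∑ j, pd j (fun w => u w j) z = 0 := by
  intro z hz
  have hS : IsOpen {y : Fin 2 → ℝ | 0 < a * y 1 + b} :=
    isOpen_lt continuous_const ((continuous_const.mul (continuous_apply 1)).add continuous_const)
  have hnhds : {y : Fin 2 → ℝ | 0 < a * y 1 + b} ∈ nhds z := hS.mem_nhds hz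
  set π0 : (Fin 2 → ℝ) →L[ℝ] ℝ := ContinuousLinearMap.proj 0 with hπ0
  set π1 : (Fin 2 → ℝ) →L[ℝ] ℝ := ContinuousLinearMap.proj 1 with hπ1
  have hπ1e1 : π1 (Pi.single 1 1) = 1 := by simp [hπ1]
  have hπ1e0 : π1 (Pi.single 0 1) = 0 := by simp [hπ1]
  have hπ0e0 : π0 (Pi.single 0 1) = 1 := by simp [hπ0]
  have hπ0e1 : π0 (Pi.single 1 1) = 0 := by simp [hπ0]
  have hu0 : ∀ y : Fin 2 → ℝ, 0 < a * y 1 + b →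
      HasFDerivAt (fun w => u w 0) ((-κ * y 1 / (a * y 1 + b)) • π1) y := by
    intro y hy
    have h := (phi_hasDerivAt a b H κ ha hb hH (y 1) hy).comp_hasFDerivAt y (π1.hasFDerivAt)
    refine HasFDerivAt.congr_of_eventuallyEq h (Filter.Eventually.of_forall fun w => ?_)
    simp [hu, hπ1]
  have pd1u0 : ∀ y : Fin 2 → ℝ, 0 < a * y 1 + b →
      pd 1 (fun w => u w 0) y = -κ * y 1 / (a * y 1 + b) := by
    intro y hy
    rw [pd_of_hasFDerivAt 1 (hu0 y hy)]
    simp [hπ1e1]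
  have pd0u0 : ∀ y : Fin 2 → ℝ, 0 < a * y 1 + b →
      pd 0 (fun w => u w 0) y = 0 := by
    intro y hy
    rw [pd_of_hasFDerivAt 0 (hu0 y hy)]
    simp [hπ1e0]
  have hu1 : (fun w => u w 1) = fun _ => (0 : ℝ) := by funext w; simp [hu]
  have pdu1 : ∀ (j : Fin 2) (y : Fin 2 → ℝ), pd j (fun w => u w 1) y = 0 := by
    intro j y
    simp [pd, hu1]
  have hpder : ∀ y : Fin 2 → ℝ, HasFDerivAt p ((-κ) • π0) y := by
    intro y
    have hd : HasDerivAt (fun t : ℝ => κ * (L / 2 - t)) (-κ) (y 0) := by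
      simpa using (((hasDerivAt_id (y 0)).const_sub (L / 2)).const_mul κ)
    have h := hd.comp_hasFDerivAt y (π0.hasFDerivAt)
    refine HasFDerivAt.congr_of_eventuallyEq h (Filter.Eventually.of_forall fun w => ?_)
    simp [hp, hπ0]
  have pd0p : pd 0 p z = -κ := by
    rw [pd_of_hasFDerivAt 0 (hpder z)]; simp [hπ0e0]
  have pd1p : pd 1 p z = 0 := by
    rw [pd_of_hasFDerivAt 1 (hpder z)]; simp [hπ0e1]
  have hstress : (fun y => ν y * (pd 1 (fun w => u w 0) y + pd 0 (fun w => u w 1) y))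
      =ᶠ[nhds z] (fun y => -κ * y 1) := by
    filter_upwards [hnhds] with y hy
    rw [pd1u0 y hy, pdu1 0 y, hν]
    have hne : a * y 1 + b ≠ 0 := ne_of_gt hy
    field_simp
    ring
  have hlinF : ∀ y : Fin 2 → ℝ, HasFDerivAt (fun w : Fin 2 → ℝ => -κ * w 1) ((-κ) • π1) y := by
    intro y
    exact (π1.hasFDerivAt).const_smul (-κ)
  refine ⟨Fin.forall_fin_two.2 ⟨?_, ?_⟩, ?_⟩
  · -- i = 0
    rw [Fin.sum_univ_two]
    have hA0 : (fun y => ν y * (pd 0 (fun w => u w 0) y + pd 0 (fun w => u w 0) y))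
        =ᶠ[nhds z] (fun _ => (0 : ℝ)) := by
      filter_upwards [hnhds] with y hy
      rw [pd0u0 y hy]; ring
    have h0 : pd 0 (fun y => ν y * (pd 0 (fun w => u w 0) y + pd 0 (fun w => u w 0) y)) z = 0 := by
      rw [pd_congr 0 hA0]
      simp [pd]
    have h1 : pd 1 (fun y => ν y * (pd 1 (fun w => u w 0) y + pd 0 (fun w => u w 1) y)) z
        = -κ := by
      rw [pd_congr 1 hstress, pd_of_hasFDerivAt 1 (hlinF z)]
      simp [hπ1e1]
    rw [h0, h1, pd0p]
    ring
  · -- i = 1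
    rw [Fin.sum_univ_two]
    have hB0 : (fun y => ν y * (pd 0 (fun w => u w 1) y + pd 1 (fun w => u w 0) y))
        =ᶠ[nhds z] (fun y => -κ * y 1) := by
      filter_upwards [hstress] with y hy
      rw [← hy]; ring_nf
    have h0 : pd 0 (fun y => ν y * (pd 0 (fun w => u w 1) y + pd 1 (fun w => u w 0) y)) z
        = 0 := by
      rw [pd_congr 0 hB0, pd_of_hasFDerivAt 0 (hlinF z)]
      simp [hπ1e0]
    have h1 : pd 1 (fun y => ν y * (pd 1 (fun w => u w 1) y + pd 1 (fun w => u w 1) y)) z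
        = 0 := by
      have he : (fun y => ν y * (pd 1 (fun w => u w 1) y + pd 1 (fun w => u w 1) y))
          = fun _ => (0 : ℝ) := by
        funext y; rw [pdu1 1 y]; ring
      rw [he]
      simp [pd]
    rw [h0, h1, pd1p]
    ring
  · rw [Fin.sum_univ_two, pd0u0 z hz, pdu1 1 z]
    ring
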